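/- arXiv:1812.04222 — 3 statements merged into one kernel-verified Lean document; each statement's English description precedes it below -/
import Mathlib

section
/- (Følner inequality for amenable fusion rules.) Let (I, 1, ‾, d, N) be a fusion datum, let F, K ⊆ I be finite subsets, let δ > 0, and suppose that K is (F,δ)-invariant. Then Σ_{(X,Y,Z)∈F×K×Kᶜ} d(X)² d(Y)² p_X(Y,Z) = Σ_{(X,Y,Z)∈F×Kᶜ×K} d(X)² d(Y)² p_{X̄}(Y,Z), and this common value is at most δ · |F|_σ · |K|_σ. Here Kᶜ := I ∖ K, and both triple sums have only finitely many nonzero terms. -/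
open scoped BigOperators

/-- A fusion datum, modelling `Irr(C)` of a rigid C*-tensor category together with
its fusion rule. -/
structure FusionDatum where
  /-- the countable index set of simple objects -/
  I : Type
  countable : Countable I
  /-- the unit object -/
  one : I
  /-- conjugation -/
  conj : I → I
  /-- intrinsic dimension -/
  d : I → ℝ
  /-- fusion multiplicities -/
  N : I → I → I → ℕ
  conj_conj : ∀ X, conj (conj X) = X
  conj_one : conj one = one
  one_le_d : ∀ X, 1 ≤ d X
  d_conj : ∀ X, d (conj X) = d X
  N_one_left_self : ∀ Y, N one Y Y = 1
  N_one_left_ne : ∀ Y Z, Y ≠ Z → N one Y Z = 0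
  N_one_right_self : ∀ Y, N Y one Y = 1
  N_one_right_ne : ∀ Y Z, Y ≠ Z → N Y one Z = 0
  mul_support_finite : ∀ X Y, {Z | N X Y Z ≠ 0}.Finite
  dim_rule : ∀ X Y, ∑ᶠ Z, (N X Y Z : ℝ) * d Z = d X * d Y
  frobenius_left : ∀ X Y Z, N X Y Z = N (conj X) Z Y
  frobenius_right : ∀ X Y Z, N X Y Z = N Z (conj Y) X
  assoc : ∀ X Y V Z, ∑ᶠ W, N X Y W * N W V Z = ∑ᶠ U, N Y V U * N X U Z

namespace FusionDatum

variable (𝕀 : FusionDatum)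

/-- transition probability of the fusion random walk -/
noncomputable def p (X Y Z : 𝕀.I) : ℝ :=
  𝕀.d Z * (𝕀.N X Y Z : ℝ) / (𝕀.d X * 𝕀.d Y)

/-- the weighted measure `|F|_σ = Σ_{X∈F} d(X)²` -/
noncomputable def sigma (S : Set 𝕀.I) : ℝ := ∑ᶠ X ∈ S, 𝕀.d X ^ 2

/-- the product set `F·K` -/
def mulSet (F K : Set 𝕀.I) : Set 𝕀.I := {Z | ∃ X ∈ F, ∃ Y ∈ K, 𝕀.N X Y Z ≠ 0}

/-- `F̄ = {X̄ : X ∈ F}` -/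
def conjSet (F : Set 𝕀.I) : Set 𝕀.I := (fun X => 𝕀.conj X) '' F

/-- `K` is `(F,δ)`-invariant when `|(F·K) △ K|_σ ≤ δ·|K|_σ`. -/
def IsInvariant (F K : Set 𝕀.I) (δ : ℝ) : Prop :=
  𝕀.sigma (symmDiff (𝕀.mulSet F K) K) ≤ δ * 𝕀.sigma K

end FusionDatum

/-!
Since `d(X)² d(Y)² p_X(Y,Z) = d(X) d(Y) d(Z) N_{X,Y}^Z`, Frobenius reciprocity gives the
reversibility `d(X)² d(Y)² p_X̄(Y,Z) = d(X)² d(Z)² p_X(Z,Y)`, so the two triple sums differ only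
in the order of the `Y`- and `Z`-summations, and only `Z ∈ F·K \ K` contribute.
Reversibility together with `Σ_Z p_X(Y,Z) = 1` bounds the sum over `Y` by `d(X)² d(Z)²`, so the
common value is at most `|F|_σ · |F·K \ K|_σ ≤ |F|_σ · |(F·K) △ K|_σ ≤ δ · |F|_σ · |K|_σ`.
-/

theorem finsum_mem_le_finsum_mem_of_subset {α M : Type*} [AddCommMonoid M] [PartialOrder M]
    [IsOrderedAddMonoid M] {f : α → M} {s t : Set α} (hst : s ⊆ t)
    (ht : (t ∩ Function.support f).Finite) (hf : ∀ x ∈ t \ s, 0 ≤ f x) :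
    ∑ᶠ x ∈ s, f x ≤ ∑ᶠ x ∈ t, f x := by
  rw [← finsum_mem_add_sdiff' hst ht]
  exact le_add_of_nonneg_right (finsum_nonneg fun x => finsum_nonneg (hf x))

theorem finsum_mem_le_finsum_mem {α M : Type*} [AddCommMonoid M] [PartialOrder M]
    [IsOrderedAddMonoid M] {f g : α → M} {s : Set α} (hs : s.Finite)
    (h : ∀ x ∈ s, f x ≤ g x) : ∑ᶠ x ∈ s, f x ≤ ∑ᶠ x ∈ s, g x := by
  rw [finsum_mem_eq_finite_toFinset_sum _ hs, finsum_mem_eq_finite_toFinset_sum _ hs]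
  exact Finset.sum_le_sum fun x hx => h x (hs.mem_toFinset.1 hx)

theorem finsum_mem_eq_finsum_mem_inter {α M : Type*} [AddCommMonoid M] {f : α → M}
    {s t : Set α} (h : ∀ x ∈ s, f x ≠ 0 → x ∈ t) :
    ∑ᶠ x ∈ s, f x = ∑ᶠ x ∈ s ∩ t, f x :=
  finsum_mem_inter_support_eq' f s (s ∩ t) fun x hx =>
    ⟨fun hs => ⟨hs, h x hs hx⟩, And.left⟩

namespace FusionDatum

variable (𝕀 : FusionDatum)

theorem d_pos (X : 𝕀.I) : 0 < 𝕀.d X := one_pos.trans_le (𝕀.one_le_d X)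

theorem N_conj_left (X Y Z : 𝕀.I) : 𝕀.N (𝕀.conj X) Y Z = 𝕀.N X Z Y := by
  rw [𝕀.frobenius_left, 𝕀.conj_conj]

theorem N_ne_zero_of_p_ne_zero {X Y Z : 𝕀.I} (h : 𝕀.p X Y Z ≠ 0) : 𝕀.N X Y Z ≠ 0 := by
  intro hN
  simp [p, hN] at h

theorem p_nonneg (X Y Z : 𝕀.I) : 0 ≤ 𝕀.p X Y Z :=
  div_nonneg (mul_nonneg (𝕀.d_pos Z).le (Nat.cast_nonneg _))
    (mul_nonneg (𝕀.d_pos X).le (𝕀.d_pos Y).le)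

theorem support_p_finite (X Y : 𝕀.I) : (Function.support (𝕀.p X Y)).Finite :=
  (𝕀.mul_support_finite X Y).subset fun _ => 𝕀.N_ne_zero_of_p_ne_zero

theorem finsum_p (X Y : 𝕀.I) : ∑ᶠ Z, 𝕀.p X Y Z = 1 := by
  have h (Z : 𝕀.I) : 𝕀.p X Y Z = 𝕀.N X Y Z * 𝕀.d Z * (𝕀.d X * 𝕀.d Y)⁻¹ := by
    rw [p, div_eq_mul_inv, mul_comm (𝕀.d Z)]
  rw [finsum_congr h, ← finsum_mul, 𝕀.dim_rule]
  exact mul_inv_cancel₀ (mul_pos (𝕀.d_pos X) (𝕀.d_pos Y)).ne'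

theorem sq_mul_sq_mul_p_conj (X Y Z : 𝕀.I) :
    𝕀.d X ^ 2 * 𝕀.d Y ^ 2 * 𝕀.p (𝕀.conj X) Y Z = 𝕀.d X ^ 2 * 𝕀.d Z ^ 2 * 𝕀.p X Z Y := by
  have := (𝕀.d_pos X).ne'
  have := (𝕀.d_pos Y).ne'
  have := (𝕀.d_pos Z).ne'
  rw [p, p, 𝕀.d_conj, 𝕀.N_conj_left]
  field_simp

theorem finsum_mem_sq_mul_sq_mul_p_le (X Z : 𝕀.I) (K : Set 𝕀.I) :
    ∑ᶠ Y ∈ K, 𝕀.d X ^ 2 * 𝕀.d Y ^ 2 * 𝕀.p X Y Z ≤ 𝕀.d X ^ 2 * 𝕀.d Z ^ 2 := by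
  simp_rw [← 𝕀.sq_mul_sq_mul_p_conj X Z]
  calc ∑ᶠ Y ∈ K, 𝕀.d X ^ 2 * 𝕀.d Z ^ 2 * 𝕀.p (𝕀.conj X) Z Y
      ≤ ∑ᶠ Y ∈ Set.univ, 𝕀.d X ^ 2 * 𝕀.d Z ^ 2 * 𝕀.p (𝕀.conj X) Z Y := by
        refine finsum_mem_le_finsum_mem_of_subset K.subset_univ ?_ fun Y _ => ?_
        · exact (𝕀.support_p_finite _ Z).subset fun Y hY => right_ne_zero_of_mul hY.2
        · exact mul_nonneg (by positivity) (𝕀.p_nonneg _ Z Y)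
    _ = 𝕀.d X ^ 2 * 𝕀.d Z ^ 2 := by
        rw [finsum_mem_univ, ← mul_finsum, finsum_p, mul_one]

theorem sigma_nonneg (S : Set 𝕀.I) : 0 ≤ 𝕀.sigma S :=
  finsum_nonneg fun _ => finsum_nonneg fun _ => sq_nonneg _

theorem sigma_mono {S T : Set 𝕀.I} (hT : T.Finite) (h : S ⊆ T) : 𝕀.sigma S ≤ 𝕀.sigma T :=
  finsum_mem_le_finsum_mem_of_subset h (hT.inter_of_left _) fun _ _ => sq_nonneg _

theorem mulSet_finite {F K : Set 𝕀.I} (hF : F.Finite) (hK : K.Finite) :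
    (𝕀.mulSet F K).Finite :=
  (hF.biUnion fun X _ => hK.biUnion fun Y _ => 𝕀.mul_support_finite X Y).subset
    fun _ ⟨_, hX, _, hY, h⟩ => Set.mem_biUnion hX (Set.mem_biUnion hY h)

theorem mem_mulSet_of_p_ne_zero {F K : Set 𝕀.I} {X Y Z : 𝕀.I} (hX : X ∈ F) (hY : Y ∈ K)
    (h : 𝕀.p X Y Z ≠ 0) : Z ∈ 𝕀.mulSet F K :=
  ⟨X, hX, Y, hY, 𝕀.N_ne_zero_of_p_ne_zero h⟩

theorem finite_setOf_p_ne_zero {F K : Set 𝕀.I} (hF : F.Finite) (hK : K.Finite) :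
    {W : 𝕀.I × 𝕀.I × 𝕀.I |
        W.1 ∈ F ∧ W.2.1 ∈ K ∧ W.2.2 ∉ K ∧ 𝕀.p W.1 W.2.1 W.2.2 ≠ 0}.Finite :=
  (hF.prod (hK.prod (𝕀.mulSet_finite hF hK))).subset fun _ ⟨hX, hY, _, hp⟩ =>
    ⟨hX, hY, 𝕀.mem_mulSet_of_p_ne_zero hX hY hp⟩

theorem finite_setOf_p_conj_ne_zero {F K : Set 𝕀.I} (hF : F.Finite) (hK : K.Finite) :
    {W : 𝕀.I × 𝕀.I × 𝕀.I |
        W.1 ∈ F ∧ W.2.1 ∉ K ∧ W.2.2 ∈ K ∧ 𝕀.p (𝕀.conj W.1) W.2.1 W.2.2 ≠ 0}.Finite :=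
  (hF.prod ((𝕀.mulSet_finite hF hK).prod hK)).subset fun ⟨X, Y, Z⟩ ⟨hX, _, hZ, hp⟩ =>
    ⟨hX, ⟨X, hX, Z, hZ, 𝕀.N_conj_left X Y Z ▸ 𝕀.N_ne_zero_of_p_ne_zero hp⟩, hZ⟩

theorem finsum_compl_eq_finsum_mulSet_inter {F K : Set 𝕀.I} (hK : K.Finite)
    (hM : (𝕀.mulSet F K).Finite) :
    ∑ᶠ X ∈ F, ∑ᶠ Y ∈ K, ∑ᶠ Z ∈ Kᶜ, 𝕀.d X ^ 2 * 𝕀.d Y ^ 2 * 𝕀.p X Y Z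
      = ∑ᶠ X ∈ F, ∑ᶠ Z ∈ Kᶜ ∩ 𝕀.mulSet F K, ∑ᶠ Y ∈ K, 𝕀.d X ^ 2 * 𝕀.d Y ^ 2 * 𝕀.p X Y Z := by
  refine finsum_mem_congr rfl fun X hX => ?_
  calc ∑ᶠ Y ∈ K, ∑ᶠ Z ∈ Kᶜ, 𝕀.d X ^ 2 * 𝕀.d Y ^ 2 * 𝕀.p X Y Z
      = ∑ᶠ Y ∈ K, ∑ᶠ Z ∈ Kᶜ ∩ 𝕀.mulSet F K, 𝕀.d X ^ 2 * 𝕀.d Y ^ 2 * 𝕀.p X Y Z :=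
        finsum_mem_congr rfl fun Y hY => finsum_mem_eq_finsum_mem_inter fun _ _ hZ =>
          𝕀.mem_mulSet_of_p_ne_zero hX hY (right_ne_zero_of_mul hZ)
    _ = _ := finsum_mem_comm _ hK (hM.inter_of_right _)

theorem finsum_conj_eq_finsum_mulSet_inter (F K : Set 𝕀.I) :
    ∑ᶠ X ∈ F, ∑ᶠ Y ∈ Kᶜ, ∑ᶠ Z ∈ K, 𝕀.d X ^ 2 * 𝕀.d Y ^ 2 * 𝕀.p (𝕀.conj X) Y Z
      = ∑ᶠ X ∈ F, ∑ᶠ Z ∈ Kᶜ ∩ 𝕀.mulSet F K, ∑ᶠ Y ∈ K, 𝕀.d X ^ 2 * 𝕀.d Y ^ 2 * 𝕀.p X Y Z := by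
  refine finsum_mem_congr rfl fun X hX => ?_
  simp_rw [sq_mul_sq_mul_p_conj]
  refine finsum_mem_eq_finsum_mem_inter fun Z _ hZ => ?_
  obtain ⟨Y, hY, hne⟩ := exists_ne_zero_of_finsum_mem_ne_zero hZ
  exact 𝕀.mem_mulSet_of_p_ne_zero hX hY (right_ne_zero_of_mul hne)

theorem triple_finsum_le_sigma_mul_sigma {F B : Set 𝕀.I} (hF : F.Finite)
    (hB : B.Finite) (K : Set 𝕀.I) :
    ∑ᶠ X ∈ F, ∑ᶠ Z ∈ B, ∑ᶠ Y ∈ K, 𝕀.d X ^ 2 * 𝕀.d Y ^ 2 * 𝕀.p X Y Z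
      ≤ 𝕀.sigma F * 𝕀.sigma B := by
  calc ∑ᶠ X ∈ F, ∑ᶠ Z ∈ B, ∑ᶠ Y ∈ K, 𝕀.d X ^ 2 * 𝕀.d Y ^ 2 * 𝕀.p X Y Z
      ≤ ∑ᶠ X ∈ F, ∑ᶠ Z ∈ B, 𝕀.d X ^ 2 * 𝕀.d Z ^ 2 :=
        finsum_mem_le_finsum_mem hF fun X _ =>
          finsum_mem_le_finsum_mem hB fun Z _ => 𝕀.finsum_mem_sq_mul_sq_mul_p_le X Z K
    _ = 𝕀.sigma F * 𝕀.sigma B := by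
        rw [sigma, sigma, finsum_mem_mul]
        simp only [mul_finsum_mem]

end FusionDatum

theorem fusion_folner_inequality_general (𝕀 : FusionDatum) (F K : Set 𝕀.I)
    (hF : F.Finite) (hK : K.Finite) (δ : ℝ)
    (hinv : 𝕀.IsInvariant F K δ) :
    {W : 𝕀.I × 𝕀.I × 𝕀.I |
        W.1 ∈ F ∧ W.2.1 ∈ K ∧ W.2.2 ∉ K ∧ 𝕀.p W.1 W.2.1 W.2.2 ≠ 0}.Finite ∧
    {W : 𝕀.I × 𝕀.I × 𝕀.I |
        W.1 ∈ F ∧ W.2.1 ∉ K ∧ W.2.2 ∈ K ∧ 𝕀.p (𝕀.conj W.1) W.2.1 W.2.2 ≠ 0}.Finite ∧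
    (∑ᶠ X ∈ F, ∑ᶠ Y ∈ K, ∑ᶠ Z ∈ Kᶜ, 𝕀.d X ^ 2 * 𝕀.d Y ^ 2 * 𝕀.p X Y Z)
      = (∑ᶠ X ∈ F, ∑ᶠ Y ∈ Kᶜ, ∑ᶠ Z ∈ K, 𝕀.d X ^ 2 * 𝕀.d Y ^ 2 * 𝕀.p (𝕀.conj X) Y Z) ∧
    (∑ᶠ X ∈ F, ∑ᶠ Y ∈ K, ∑ᶠ Z ∈ Kᶜ, 𝕀.d X ^ 2 * 𝕀.d Y ^ 2 * 𝕀.p X Y Z)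
      ≤ δ * 𝕀.sigma F * 𝕀.sigma K := by
  have hM := 𝕀.mulSet_finite hF hK
  have hboundary : Kᶜ ∩ 𝕀.mulSet F K ⊆ symmDiff (𝕀.mulSet F K) K :=
    fun _ ⟨hZK, hZM⟩ => Or.inl ⟨hZM, hZK⟩
  refine ⟨𝕀.finite_setOf_p_ne_zero hF hK, 𝕀.finite_setOf_p_conj_ne_zero hF hK, ?_, ?_⟩
  · rw [𝕀.finsum_compl_eq_finsum_mulSet_inter hK hM, 𝕀.finsum_conj_eq_finsum_mulSet_inter]
  calc _ = _ := 𝕀.finsum_compl_eq_finsum_mulSet_inter hK hM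
    _ ≤ 𝕀.sigma F * 𝕀.sigma (Kᶜ ∩ 𝕀.mulSet F K) :=
        𝕀.triple_finsum_le_sigma_mul_sigma hF (hM.inter_of_right _) K
    _ ≤ 𝕀.sigma F * 𝕀.sigma (symmDiff (𝕀.mulSet F K) K) :=
        mul_le_mul_of_nonneg_left
          (𝕀.sigma_mono ((hM.union hK).subset Set.symmDiff_subset_union) hboundary)
          (𝕀.sigma_nonneg F)
    _ ≤ 𝕀.sigma F * (δ * 𝕀.sigma K) := mul_le_mul_of_nonneg_left hinv (𝕀.sigma_nonneg F)
    _ = δ * 𝕀.sigma F * 𝕀.sigma K := by ring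

/-- (Følner inequality for amenable fusion rules.) If `K` is
`(F,δ)`-invariant, then
`Σ_{(X,Y,Z)∈F×K×Kᶜ} d(X)² d(Y)² p_X(Y,Z) = Σ_{(X,Y,Z)∈F×Kᶜ×K} d(X)² d(Y)² p_{X̄}(Y,Z)`
and this common value is at most `δ · |F|_σ · |K|_σ`; both triple sums have only
finitely many nonzero terms. -/
theorem fusion_folner_inequality (𝕀 : FusionDatum) (F K : Set 𝕀.I)
    (hF : F.Finite) (hK : K.Finite) (δ : ℝ) (hδ : 0 < δ)
    (hinv : 𝕀.IsInvariant F K δ) :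
    {W : 𝕀.I × 𝕀.I × 𝕀.I |
        W.1 ∈ F ∧ W.2.1 ∈ K ∧ W.2.2 ∉ K ∧ 𝕀.p W.1 W.2.1 W.2.2 ≠ 0}.Finite ∧
    {W : 𝕀.I × 𝕀.I × 𝕀.I |
        W.1 ∈ F ∧ W.2.1 ∉ K ∧ W.2.2 ∈ K ∧ 𝕀.p (𝕀.conj W.1) W.2.1 W.2.2 ≠ 0}.Finite ∧
    (∑ᶠ X ∈ F, ∑ᶠ Y ∈ K, ∑ᶠ Z ∈ Kᶜ, 𝕀.d X ^ 2 * 𝕀.d Y ^ 2 * 𝕀.p X Y Z)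
      = (∑ᶠ X ∈ F, ∑ᶠ Y ∈ Kᶜ, ∑ᶠ Z ∈ K, 𝕀.d X ^ 2 * 𝕀.d Y ^ 2 * 𝕀.p (𝕀.conj X) Y Z) ∧
    (∑ᶠ X ∈ F, ∑ᶠ Y ∈ K, ∑ᶠ Z ∈ Kᶜ, 𝕀.d X ^ 2 * 𝕀.d Y ^ 2 * 𝕀.p X Y Z)
      ≤ δ * 𝕀.sigma F * 𝕀.sigma K :=
  fusion_folner_inequality_general 𝕀 F K hF hK δ hinv
end

section
/- (Submultiplicativity of the weighted measure σ.) Let (I_rs, 1_r, ‾, d, N) be a 2-graded fusion datum over Λ = {0,1}, let r, s, t ∈ Λ, and let F ⊆ I_rs and G ⊆ I_st be finite subsets. Then |F·G|_σ ≤ |F|_σ · |G|_σ. -/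
open scoped BigOperators

/-- A 2-graded fusion datum over `Λ = {0,1}`, modelling the sets `Irr(C_rs)` of
isomorphism classes of simple 1-morphisms of a rigid C*-2-category. -/
structure GradedFusionDatum where
  /-- the countable index sets of simple 1-morphisms -/
  I : Fin 2 → Fin 2 → Type
  countable : ∀ r s, Countable (I r s)
  nonemptyI : ∀ r s, Nonempty (I r s)
  /-- the unit objects -/
  one : ∀ r, I r r
  /-- conjugation -/
  conj : ∀ {r s}, I r s → I s r
  /-- intrinsic dimension -/
  d : ∀ {r s}, I r s → ℝ
  /-- fusion multiplicities -/
  N : ∀ {r s t}, I r s → I s t → I r t → ℕ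
  conj_conj : ∀ {r s} (X : I r s), conj (conj X) = X
  conj_one : ∀ r, conj (one r) = one r
  one_le_d : ∀ {r s} (X : I r s), 1 ≤ d X
  d_conj : ∀ {r s} (X : I r s), d (conj X) = d X
  N_one_left_self : ∀ {r s} (Y : I r s), N (one r) Y Y = 1
  N_one_left_ne : ∀ {r s} (Y Z : I r s), Y ≠ Z → N (one r) Y Z = 0
  N_one_right_self : ∀ {r s} (Y : I r s), N Y (one s) Y = 1
  N_one_right_ne : ∀ {r s} (Y Z : I r s), Y ≠ Z → N Y (one s) Z = 0
  mul_support_finite : ∀ {r s t} (X : I r s) (Y : I s t), {Z : I r t | N X Y Z ≠ 0}.Finite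
  dim_rule : ∀ {r s t} (X : I r s) (Y : I s t),
    ∑ᶠ Z : I r t, (N X Y Z : ℝ) * d Z = d X * d Y
  frobenius_left : ∀ {r s t} (X : I r s) (Y : I s t) (Z : I r t), N X Y Z = N (conj X) Z Y
  frobenius_right : ∀ {r s t} (X : I r s) (Y : I s t) (Z : I r t), N X Y Z = N Z (conj Y) X
  assoc : ∀ {r s t u} (X : I r s) (Y : I s t) (V : I t u) (Z : I r u),
    ∑ᶠ W : I r t, N X Y W * N W V Z = ∑ᶠ U : I s u, N Y V U * N X U Z

namespace GradedFusionDatum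

variable (𝕀 : GradedFusionDatum)

/-- transition probability of the fusion random walk -/
noncomputable def p {r s t : Fin 2} (X : 𝕀.I r s) (Y : 𝕀.I s t) (Z : 𝕀.I r t) : ℝ :=
  𝕀.d Z * (𝕀.N X Y Z : ℝ) / (𝕀.d X * 𝕀.d Y)

/-- the weighted measure `|F|_σ = Σ_{X∈F} d(X)²` -/
noncomputable def sigma {r s : Fin 2} (S : Set (𝕀.I r s)) : ℝ := ∑ᶠ X ∈ S, 𝕀.d X ^ 2

/-- the product set `F·K` -/
def mulSet {r s t : Fin 2} (F : Set (𝕀.I r s)) (K : Set (𝕀.I s t)) : Set (𝕀.I r t) :=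
  {Z | ∃ X ∈ F, ∃ Y ∈ K, 𝕀.N X Y Z ≠ 0}

/-- `F̄ = {X̄ : X ∈ F}` -/
def conjSet {r s : Fin 2} (F : Set (𝕀.I r s)) : Set (𝕀.I s r) :=
  (fun X => 𝕀.conj X) '' F

/-- Amenability: every finite subset of `I 0 0` admits nonempty finite
`(F,δ)`-invariant sets. -/
def Amenable : Prop :=
  ∀ F : Set (𝕀.I 0 0), F.Finite → ∀ δ : ℝ, 0 < δ →
    ∃ K : Set (𝕀.I 0 0), K.Finite ∧ K.Nonempty ∧
      𝕀.sigma (symmDiff (𝕀.mulSet F K) K) ≤ δ * 𝕀.sigma K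

end GradedFusionDatum

/-!
By the dimension rule, `Σ_Z N_{X,Y}^Z d(Z) = d(X) d(Y)`, and every `Z` with `N_{X,Y}^Z ≠ 0`
occurs with multiplicity at least one, so the fusion support of `X ⊗ Y` has
`Σ d(Z)² ≤ (Σ d(Z))² ≤ (d(X) d(Y))²`. Since `F·G` is the union of these supports over
`(X, Y) ∈ F × G`, its weight is at most `Σ_{X,Y} d(X)² d(Y)² = |F|_σ |G|_σ`.
-/

theorem Finset.sum_union_le_of_nonneg {α M : Type*} [DecidableEq α] [AddCommMonoid M]
    [PartialOrder M] [IsOrderedAddMonoid M] {f : α → M} (s : Finset α) {t : Finset α}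
    (hf : ∀ a ∈ t, 0 ≤ f a) : ∑ a ∈ s ∪ t, f a ≤ ∑ a ∈ s, f a + ∑ a ∈ t, f a := by
  rw [← Finset.union_sdiff_self_eq_union, Finset.sum_union Finset.disjoint_sdiff]
  gcongr
  · exact fun a ha _ => hf a ha
  · exact Finset.sdiff_subset

theorem Finset.sum_biUnion_le_of_nonneg {ι α M : Type*} [DecidableEq α] [AddCommMonoid M]
    [PartialOrder M] [IsOrderedAddMonoid M] {f : α → M} (hf : 0 ≤ f) (s : Finset ι)
    (t : ι → Finset α) : ∑ a ∈ s.biUnion t, f a ≤ ∑ i ∈ s, ∑ a ∈ t i, f a := by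
  rw [← Finset.sup_eq_biUnion]
  exact s.apply_sup_le_sum (f := fun u => ∑ a ∈ u, f a) Finset.sum_empty
    (Finset.sum_union_le_of_nonneg _ fun a _ => hf a)

namespace GradedFusionDatum

variable (𝕀 : GradedFusionDatum) {r s t : Fin 2}

theorem d_pos (X : 𝕀.I r s) : 0 < 𝕀.d X :=
  one_pos.trans_le (𝕀.one_le_d X)

noncomputable def mulSupport (X : 𝕀.I r s) (Y : 𝕀.I s t) : Finset (𝕀.I r t) :=
  (𝕀.mul_support_finite X Y).toFinset

@[simp]
theorem mem_mulSupport {X : 𝕀.I r s} {Y : 𝕀.I s t} {Z : 𝕀.I r t} :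
    Z ∈ 𝕀.mulSupport X Y ↔ 𝕀.N X Y Z ≠ 0 :=
  Set.Finite.mem_toFinset _

theorem sum_mulSupport_N_mul_d (X : 𝕀.I r s) (Y : 𝕀.I s t) :
    ∑ Z ∈ 𝕀.mulSupport X Y, (𝕀.N X Y Z : ℝ) * 𝕀.d Z = 𝕀.d X * 𝕀.d Y := by
  rw [← 𝕀.dim_rule X Y, finsum_eq_sum_of_support_subset]
  intro Z hZ
  simpa [mulSupport] using left_ne_zero_of_mul hZ

theorem sum_mulSupport_d_le (X : 𝕀.I r s) (Y : 𝕀.I s t) :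
    ∑ Z ∈ 𝕀.mulSupport X Y, 𝕀.d Z ≤ 𝕀.d X * 𝕀.d Y := by
  rw [← 𝕀.sum_mulSupport_N_mul_d X Y]
  refine Finset.sum_le_sum fun Z hZ => le_mul_of_one_le_left (𝕀.d_pos Z).le ?_
  exact_mod_cast Nat.one_le_iff_ne_zero.2 ((𝕀.mem_mulSupport).1 hZ)

theorem sum_mulSupport_d_sq_le (X : 𝕀.I r s) (Y : 𝕀.I s t) :
    ∑ Z ∈ 𝕀.mulSupport X Y, 𝕀.d Z ^ 2 ≤ (𝕀.d X * 𝕀.d Y) ^ 2 :=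
  (Finset.sum_sq_le_sq_sum_of_nonneg fun Z _ => (𝕀.d_pos Z).le).trans <|
    pow_le_pow_left₀ (Finset.sum_nonneg fun Z _ => (𝕀.d_pos Z).le) (𝕀.sum_mulSupport_d_le X Y) 2

theorem sigma_coe (S : Finset (𝕀.I r s)) :
    𝕀.sigma (S : Set (𝕀.I r s)) = ∑ X ∈ S, 𝕀.d X ^ 2 :=
  finsum_mem_coe_finset _ _

theorem mulSet_coe [DecidableEq (𝕀.I r t)] (F : Finset (𝕀.I r s)) (G : Finset (𝕀.I s t)) :
    𝕀.mulSet (F : Set (𝕀.I r s)) (G : Set (𝕀.I s t)) =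
      ↑((F ×ˢ G).biUnion fun p => 𝕀.mulSupport p.1 p.2) := by
  ext Z
  simp [mulSet]

end GradedFusionDatum

/-- (Submultiplicativity of the weighted measure σ.)
For finite `F ⊆ I_rs` and `G ⊆ I_st`, `|F·G|_σ ≤ |F|_σ · |G|_σ`. -/
theorem graded_sigma_submultiplicative (𝕀 : GradedFusionDatum) (r s t : Fin 2)
    (F : Set (𝕀.I r s)) (G : Set (𝕀.I s t)) (hF : F.Finite) (hG : G.Finite) :
    𝕀.sigma (𝕀.mulSet F G) ≤ 𝕀.sigma F * 𝕀.sigma G := by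
  classical
  lift F to Finset (𝕀.I r s) using hF
  lift G to Finset (𝕀.I s t) using hG
  calc 𝕀.sigma (𝕀.mulSet (F : Set (𝕀.I r s)) (G : Set (𝕀.I s t)))
      = ∑ Z ∈ (F ×ˢ G).biUnion (fun p => 𝕀.mulSupport p.1 p.2), 𝕀.d Z ^ 2 := by
        rw [𝕀.mulSet_coe, 𝕀.sigma_coe]
    _ ≤ ∑ p ∈ F ×ˢ G, ∑ Z ∈ 𝕀.mulSupport p.1 p.2, 𝕀.d Z ^ 2 :=
        Finset.sum_biUnion_le_of_nonneg (fun Z => sq_nonneg (𝕀.d Z)) _ _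
    _ ≤ ∑ p ∈ F ×ˢ G, (𝕀.d p.1 * 𝕀.d p.2) ^ 2 :=
        Finset.sum_le_sum fun p _ => 𝕀.sum_mulSupport_d_sq_le p.1 p.2
    _ = 𝕀.sigma (F : Set (𝕀.I r s)) * 𝕀.sigma (G : Set (𝕀.I s t)) := by
        simp_rw [𝕀.sigma_coe, Finset.sum_mul_sum, Finset.sum_product, mul_pow]
end

section
/- (Generation of the corner pieces from the off-diagonal piece.) Let (I_rs, 1_r, ‾, d, N) be a 2-graded fusion datum over Λ = {0,1}. Then: (a) for every X ∈ I_00 and every Y ∈ I_10 there exists Z ∈ I_10 with N_{Ȳ,Z}^X ≠ 0, and for every X ∈ I_11 and every Y ∈ I_10 there exists Z ∈ I_10 with N_{Z,Ȳ}^X ≠ 0; (b) consequently, for any finite subsets F_00 ⊆ I_00, F_10 ⊆ I_10, F_01 ⊆ I_01, F_11 ⊆ I_11 there exists a nonempty finite subset G ⊆ I_10 such that F_00 ⊆ Ḡ·G, F_10 ⊆ G, F_01 ⊆ Ḡ, and F_11 ⊆ G·Ḡ. -/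
open scoped BigOperators

/-!
The dimension rule, together with `d ≥ 1`, forces every fusion product `X ⊗ Y` to contain
some simple `Z`, and Frobenius reciprocity moves `Z` and `X` to the positions required in (a).
For (b), fix any `Y ∈ I_10`; then `G` consisting of `Y`, `F_10`, `F̄_01` and, for every `X` in
`F_00` or `F_11`, a witness `Z` from (a) for the pair `(X, Y)` does the job.
-/

namespace GradedFusionDatum

variable (𝕀 : GradedFusionDatum) {r s t : Fin 2}

theorem exists_N_ne_zero (X : 𝕀.I r s) (Y : 𝕀.I s t) : ∃ Z, 𝕀.N X Y Z ≠ 0 := by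
  by_contra! h
  have hdim := 𝕀.dim_rule X Y
  simp only [h, Nat.cast_zero, zero_mul, finsum_zero] at hdim
  nlinarith [𝕀.one_le_d X, 𝕀.one_le_d Y]

theorem exists_N_conj_left_ne_zero (X : 𝕀.I r t) (Y : 𝕀.I s r) :
    ∃ Z : 𝕀.I s t, 𝕀.N (𝕀.conj Y) Z X ≠ 0 := by
  obtain ⟨Z, hZ⟩ := 𝕀.exists_N_ne_zero Y X
  exact ⟨Z, 𝕀.frobenius_left Y X Z ▸ hZ⟩

theorem exists_N_conj_right_ne_zero (X : 𝕀.I r t) (Y : 𝕀.I t s) :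
    ∃ Z : 𝕀.I r s, 𝕀.N Z (𝕀.conj Y) X ≠ 0 := by
  obtain ⟨Z, hZ⟩ := 𝕀.exists_N_ne_zero X Y
  exact ⟨Z, 𝕀.frobenius_right X Y Z ▸ hZ⟩

variable {𝕀}

theorem conj_mem_conjSet {G : Set (𝕀.I r s)} {X : 𝕀.I r s} (h : X ∈ G) :
    𝕀.conj X ∈ 𝕀.conjSet G :=
  Set.mem_image_of_mem _ h

theorem mem_conjSet_of_conj_mem {G : Set (𝕀.I r s)} {X : 𝕀.I s r} (h : 𝕀.conj X ∈ G) :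
    X ∈ 𝕀.conjSet G :=
  ⟨𝕀.conj X, h, 𝕀.conj_conj X⟩

variable (𝕀)

theorem exists_finite_generating_set (Frr : Set (𝕀.I r r)) (Fsr : Set (𝕀.I s r))
    (Frs : Set (𝕀.I r s)) (Fss : Set (𝕀.I s s)) (hrr : Frr.Finite) (hsr : Fsr.Finite)
    (hrs : Frs.Finite) (hss : Fss.Finite) :
    ∃ G : Set (𝕀.I s r), G.Finite ∧ G.Nonempty ∧
      Frr ⊆ 𝕀.mulSet (𝕀.conjSet G) G ∧ Fsr ⊆ G ∧
      Frs ⊆ 𝕀.conjSet G ∧ Fss ⊆ 𝕀.mulSet G (𝕀.conjSet G) := by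
  obtain ⟨Y⟩ := 𝕀.nonemptyI s r
  choose zl hzl using fun X : 𝕀.I r r => 𝕀.exists_N_conj_left_ne_zero X Y
  choose zr hzr using fun X : 𝕀.I s s => 𝕀.exists_N_conj_right_ne_zero X Y
  set G := insert Y (Fsr ∪ 𝕀.conj '' Frs ∪ zl '' Frr ∪ zr '' Fss) with hG
  have hYG : 𝕀.conj Y ∈ 𝕀.conjSet G := conj_mem_conjSet (Set.mem_insert Y _)
  refine ⟨G, ?_, Set.insert_nonempty Y _, ?_, ?_, ?_, ?_⟩
  · exact (((hsr.union (hrs.image _)).union (hrr.image _)).union (hss.image _)).insert Y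
  · intro X hX
    exact ⟨𝕀.conj Y, hYG, zl X, by simp [hG, Set.mem_image_of_mem zl hX], hzl X⟩
  · intro X hX
    simp [hG, hX]
  · intro X hX
    exact mem_conjSet_of_conj_mem (by simp [hG, Set.mem_image_of_mem 𝕀.conj hX])
  · intro X hX
    exact ⟨zr X, by simp [hG, Set.mem_image_of_mem zr hX], 𝕀.conj Y, hYG, hzr X⟩

end GradedFusionDatum

/-- (Generation of the corner pieces from the off-diagonal piece.)
(a) every `X ∈ I_00` (resp. `X ∈ I_11`) appears in some `Ȳ ⊗ Z` (resp. `Z ⊗ Ȳ`)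
with `Z ∈ I_10`; (b) any finite subsets `F_rs` are contained in the pieces
generated by a single nonempty finite `G ⊆ I_10`. -/
theorem graded_corner_generation (𝕀 : GradedFusionDatum) :
    ((∀ (X : 𝕀.I 0 0) (Y : 𝕀.I 1 0), ∃ Z : 𝕀.I 1 0, 𝕀.N (𝕀.conj Y) Z X ≠ 0) ∧
     (∀ (X : 𝕀.I 1 1) (Y : 𝕀.I 1 0), ∃ Z : 𝕀.I 1 0, 𝕀.N Z (𝕀.conj Y) X ≠ 0)) ∧
    (∀ (F00 : Set (𝕀.I 0 0)) (F10 : Set (𝕀.I 1 0))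
       (F01 : Set (𝕀.I 0 1)) (F11 : Set (𝕀.I 1 1)),
      F00.Finite → F10.Finite → F01.Finite → F11.Finite →
      ∃ G : Set (𝕀.I 1 0), G.Finite ∧ G.Nonempty ∧
        F00 ⊆ 𝕀.mulSet (𝕀.conjSet G) G ∧ F10 ⊆ G ∧
        F01 ⊆ 𝕀.conjSet G ∧ F11 ⊆ 𝕀.mulSet G (𝕀.conjSet G)) :=
  ⟨⟨𝕀.exists_N_conj_left_ne_zero, 𝕀.exists_N_conj_right_ne_zero⟩,
    𝕀.exists_finite_generating_set⟩
end
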